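/- arXiv:1003.1160 — 4 statements merged into one kernel-verified Lean document; each statement's English description precedes it below -/
import Mathlib

section
/- The trace simulation relation ⋉ is transitive: for all traces α, β, γ, if α ⋉ β and β ⋉ γ then α ⋉ γ. (This uses the transitivity of the entailment relation ⊨_c on guard conditions.) -/
/- Tokens, traces, the unwrap rewriting relation and the trace simulation
relation of "Required Behavior of Sequence Diagrams: Semantics and
Conformance" (Lu & Kim). -/

namespace SDPaper

/-- An atom is an event or a guard condition. -/
inductive Atom (E C : Type) : Type where
  | evt : E → Atom E C
  | cnd : C → Atom E C

/-- A token is an event, a condition, or a critical segment wrapping a finite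
sequence of events and conditions. -/
inductive Tok (E C : Type) : Type where
  | atom : Atom E C → Tok E C
  | crit : List (Atom E C) → Tok E C

/-- A trace is a finite sequence of tokens. -/
abbrev Trace (E C : Type) : Type := List (Tok E C)

/-- The token carrying a guard condition. -/
def condTok {E C : Type} (c : C) : Tok E C := Tok.atom (Atom.cnd c)

/-- The token carrying an event. -/
def evtTok {E C : Type} (e : E) : Tok E C := Tok.atom (Atom.evt e)

/-- The unwrap rewriting relation `↷` on traces: one step exposes one critical
segment, `α⟨σ⟩β ↷ ασβ`. -/
inductive Unwrap {E C : Type} : Trace E C → Trace E C → Prop where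
  | step (α β : Trace E C) (σ : List (Atom E C)) :
      Unwrap (α ++ Tok.crit σ :: β) (α ++ σ.map Tok.atom ++ β)

/-- The reflexive–transitive closure `↷*` of the unwrap relation. -/
def Unwraps {E C : Type} : Trace E C → Trace E C → Prop :=
  Relation.ReflTransGen Unwrap

section Sim

variable {E C : Type} (ent : C → C → Prop)

/-- Simulation on atoms: `c₁ ⋉ c₂` if `c₂ ⊨_c c₁`; `e₁ ⋉ e₂` if `e₁ = e₂`.
Here `ent c₁ c₂` denotes the entailment `c₁ ⊨_c c₂`. -/
inductive AtomSim : Atom E C → Atom E C → Prop where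
  | evt (e : E) : AtomSim (Atom.evt e) (Atom.evt e)
  | cnd {c₁ c₂ : C} : ent c₂ c₁ → AtomSim (Atom.cnd c₁) (Atom.cnd c₂)

/-- Simulation on sequences of events and conditions (used inside critical
segments, which contain no nested critical segments): there is a strictly
increasing reindexing function `η` such that corresponding atoms are similar
and every position outside the image of `η` carries a condition. -/
def SeqSim (α γ : List (Atom E C)) : Prop :=
  ∃ η : Fin α.length → Fin γ.length, StrictMono η ∧
    (∀ i : Fin α.length, AtomSim ent (α.get i) (γ.get (η i))) ∧
    (∀ j : Fin γ.length, (∀ i, η i ≠ j) → ∃ c : C, γ.get j = Atom.cnd c)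

/-- Simulation on tokens: a critical segment can only be simulated by a
critical segment, `⟨α⟩ ⋉ ⟨γ⟩` if `α ⋉ γ`. -/
inductive TokSim : Tok E C → Tok E C → Prop where
  | atom {a b : Atom E C} : AtomSim ent a b → TokSim (Tok.atom a) (Tok.atom b)
  | crit {α γ : List (Atom E C)} : SeqSim ent α γ → TokSim (Tok.crit α) (Tok.crit γ)

/-- The trace simulation relation `α ⋉ γ`: there are a trace `β` with
`α ↷* β` and a strictly increasing `η : dom(β) → dom(γ)` such that
`β(i) ⋉ γ(η(i))` for every `i` and every position of `γ` outside the image of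
`η` carries a condition. -/
def TraceSim (α γ : Trace E C) : Prop :=
  ∃ β : Trace E C, Unwraps α β ∧
    ∃ η : Fin β.length → Fin γ.length, StrictMono η ∧
      (∀ i : Fin β.length, TokSim ent (β.get i) (γ.get (η i))) ∧
      (∀ j : Fin γ.length, (∀ i, η i ≠ j) → ∃ c : C, γ.get j = condTok c)

end Sim

end SDPaper

/-! A strictly increasing reindexing that leaves only conditions unmatched is the
same as a left-to-right walk through the target that either matches the next
source token or skips a condition; as an inductive relation (`Embeds`) this
composes like `List.Sublist`. An unwrap step on the middle trace opens a critical
segment, which can only be matched by a critical segment (skipped tokens are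
conditions), so the step can be mirrored on the left: if `α₁` embeds into `β`
and `β ↷* β₁`, then `α₁ ↷* α₂` for some `α₂` embedding into `β₁`. Transitivity
then reduces to composing embeddings. -/

theorem Fin.exists_succ_comp_of_ne_zero {k n : ℕ} {η : Fin k → Fin (n + 1)}
    (h : ∀ i, η i ≠ 0) : ∃ η' : Fin k → Fin n, η = Fin.succ ∘ η' :=
  ⟨fun i => (η i).pred (h i), funext fun _ => (Fin.succ_pred _ _).symm⟩

namespace SDPaper

section Embeds

variable {T : Type} {R : T → T → Prop} {P : T → Prop}

variable (R P) in
def IndexEmbeds (l m : List T) : Prop :=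
  ∃ η : Fin l.length → Fin m.length, StrictMono η ∧
    (∀ i, R (l.get i) (m.get (η i))) ∧ (∀ j, (∀ i, η i ≠ j) → P (m.get j))

variable (R P) in
inductive Embeds : List T → List T → Prop where
  | nil : Embeds [] []
  | cons {a b : T} {l m : List T} : R a b → Embeds l m → Embeds (a :: l) (b :: m)
  | skip {b : T} {l m : List T} : P b → Embeds l m → Embeds l (b :: m)

theorem IndexEmbeds.cons {a b : T} {l m : List T} (hab : R a b) :
    IndexEmbeds R P l m → IndexEmbeds R P (a :: l) (b :: m) := by
  rintro ⟨η, hη, hR, hP⟩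
  refine ⟨Fin.cons 0 (Fin.succ ∘ η), ?_, ?_, ?_⟩
  · exact Fin.strictMono_cons.mpr ⟨fun i => Fin.succ_pos _, Fin.strictMono_succ.comp hη⟩
  · exact Fin.cases hab hR
  · refine Fin.cases (fun h => absurd rfl (h 0)) fun j hj => ?_
    simpa using hP j fun i hi => hj i.succ (by simp [hi])

theorem IndexEmbeds.skip {b : T} {l m : List T} (hb : P b) :
    IndexEmbeds R P l m → IndexEmbeds R P l (b :: m) := by
  rintro ⟨η, hη, hR, hP⟩
  refine ⟨Fin.succ ∘ η, Fin.strictMono_succ.comp hη, hR, ?_⟩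
  refine Fin.cases (fun _ => hb) fun j hj => ?_
  simpa using hP j fun i hi => hj i (by simp [hi])

theorem IndexEmbeds.cons_right_cases {b : T} {l m : List T}
    (h : IndexEmbeds R P l (b :: m)) :
    (P b ∧ IndexEmbeds R P l m) ∨
      ∃ a l', l = a :: l' ∧ R a b ∧ IndexEmbeds R P l' m := by
  obtain ⟨η, hη, hR, hP⟩ := h
  by_cases hhit : ∃ i, η i = 0
  · right
    obtain ⟨i, hi⟩ := hhit
    cases l with
    | nil => exact i.elim0
    | cons a l =>
      have hη0 : η 0 = 0 := nonpos_iff_eq_zero.mp (hi ▸ hη.monotone (Fin.zero_le i))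
      obtain ⟨η', hη'⟩ := Fin.exists_succ_comp_of_ne_zero (η := η ∘ Fin.succ)
        fun i => (hη0 ▸ hη (Fin.succ_pos i)).ne'
      have hsucc (i : Fin l.length) : η i.succ = (η' i).succ := congrFun hη' i
      refine ⟨a, l, rfl, by simpa [hη0] using hR 0, η', ?_, ?_, ?_⟩
      · exact fun i j hij => by simpa [hsucc] using hη (Fin.succ_lt_succ_iff.mpr hij)
      · exact fun i => by simpa [hsucc] using hR i.succ
      · intro j hj
        have hgap : ∀ i, η i ≠ j.succ :=
          Fin.cases (by simp [hη0, (Fin.succ_ne_zero j).symm])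
            fun i hi => hj i (by simpa [hsucc] using hi)
        simpa using hP j.succ hgap
  · left
    simp only [not_exists] at hhit
    obtain ⟨η', rfl⟩ := Fin.exists_succ_comp_of_ne_zero hhit
    refine ⟨by simpa using hP 0 hhit, η', ?_, fun i => by simpa using hR i, fun j hj => ?_⟩
    · exact fun i j hij => Fin.succ_lt_succ_iff.mp (hη hij)
    · simpa using hP j.succ fun i hi => hj i (Fin.succ_injective _ hi)

theorem embeds_iff_indexEmbeds {l m : List T} : Embeds R P l m ↔ IndexEmbeds R P l m := by
  constructor
  · intro h
    induction h with
    | nil => exact ⟨Fin.elim0, fun i => i.elim0, fun i => i.elim0, fun j => j.elim0⟩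
    | cons hab _ ih => exact ih.cons hab
    | skip hb _ ih => exact ih.skip hb
  · intro h
    induction m generalizing l with
    | nil =>
      obtain ⟨η, -⟩ := h
      cases l with
      | nil => exact .nil
      | cons a l => exact (η ⟨0, by simp⟩).elim0
    | cons b m ih =>
      obtain ⟨hb, h⟩ | ⟨a, l, rfl, hab, h⟩ := h.cons_right_cases
      · exact .skip hb (ih h)
      · exact .cons hab (ih h)

theorem Embeds.append {l₁ l₂ m₁ m₂ : List T} (h₁ : Embeds R P l₁ m₁) (h₂ : Embeds R P l₂ m₂) :
    Embeds R P (l₁ ++ l₂) (m₁ ++ m₂) := by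
  induction h₁ with
  | nil => exact h₂
  | cons hab _ ih => exact .cons hab ih
  | skip hb _ ih => exact .skip hb ih

theorem Embeds.exists_append_of_append_right {l m₁ m₂ : List T} (h : Embeds R P l (m₁ ++ m₂)) :
    ∃ l₁ l₂, l = l₁ ++ l₂ ∧ Embeds R P l₁ m₁ ∧ Embeds R P l₂ m₂ := by
  induction m₁ generalizing l with
  | nil => exact ⟨[], l, rfl, .nil, h⟩
  | cons b m₁ ih =>
    cases h with
    | cons hab h =>
      obtain ⟨l₁, l₂, rfl, h₁, h₂⟩ := ih h
      exact ⟨_ :: l₁, l₂, rfl, .cons hab h₁, h₂⟩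
    | skip hb h =>
      obtain ⟨l₁, l₂, rfl, h₁, h₂⟩ := ih h
      exact ⟨l₁, l₂, rfl, .skip hb h₁, h₂⟩

theorem Embeds.trans {l m n : List T} (h₁ : Embeds R P l m) (h₂ : Embeds R P m n)
    (hR : ∀ {a b c}, R a b → R b c → R a c) (hP : ∀ {b c}, P b → R b c → P c) :
    Embeds R P l n := by
  induction h₂ generalizing l with
  | nil => exact h₁
  | cons hbc _ ih =>
    cases h₁ with
    | cons hab h₁ => exact .cons (hR hab hbc) (ih h₁)
    | skip hb h₁ => exact .skip (hP hb hbc) (ih h₁)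
  | skip hc _ ih => exact .skip hc (ih h₁)

end Embeds

section Simulation

variable {E C : Type} {ent : C → C → Prop}

def IsCndAtom (a : Atom E C) : Prop := ∃ c, a = Atom.cnd c

def IsCondTok (t : Tok E C) : Prop := ∃ c, t = condTok c

theorem seqSim_iff_embeds {α γ : List (Atom E C)} :
    SeqSim ent α γ ↔ Embeds (AtomSim ent) IsCndAtom α γ :=
  (embeds_iff_indexEmbeds (R := AtomSim ent) (P := IsCndAtom)).symm

theorem traceSim_iff_embeds {α γ : Trace E C} :
    TraceSim ent α γ ↔ ∃ β, Unwraps α β ∧ Embeds (TokSim ent) IsCondTok β γ := by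
  simp only [embeds_iff_indexEmbeds]
  rfl

theorem AtomSim.trans (ent_trans : ∀ c₁ c₂ c₃ : C, ent c₁ c₂ → ent c₂ c₃ → ent c₁ c₃)
    {a b c : Atom E C} (h₁ : AtomSim ent a b) (h₂ : AtomSim ent b c) :
    AtomSim ent a c := by
  cases h₁ with
  | evt e => exact h₂
  | cnd h₁ => cases h₂ with | cnd h₂ => exact .cnd (ent_trans _ _ _ h₂ h₁)

theorem AtomSim.isCndAtom {a b : Atom E C} (ha : IsCndAtom a) (h : AtomSim ent a b) :
    IsCndAtom b := by
  obtain ⟨c, rfl⟩ := ha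
  cases h with | cnd _ => exact ⟨_, rfl⟩

theorem TokSim.isCondTok {s t : Tok E C} (hs : IsCondTok s) (h : TokSim ent s t) :
    IsCondTok t := by
  obtain ⟨c, rfl⟩ := hs
  cases h with | atom h => obtain ⟨c', rfl⟩ := AtomSim.isCndAtom ⟨c, rfl⟩ h; exact ⟨c', rfl⟩

theorem SeqSim.trans (ent_trans : ∀ c₁ c₂ c₃ : C, ent c₁ c₂ → ent c₂ c₃ → ent c₁ c₃)
    {α β γ : List (Atom E C)} (h₁ : SeqSim ent α β) (h₂ : SeqSim ent β γ) : SeqSim ent α γ :=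
  seqSim_iff_embeds.mpr <| (seqSim_iff_embeds.mp h₁).trans (seqSim_iff_embeds.mp h₂)
    (AtomSim.trans ent_trans) AtomSim.isCndAtom

theorem TokSim.trans (ent_trans : ∀ c₁ c₂ c₃ : C, ent c₁ c₂ → ent c₂ c₃ → ent c₁ c₃)
    {s t u : Tok E C} (h₁ : TokSim ent s t) (h₂ : TokSim ent t u) : TokSim ent s u := by
  cases h₁ with
  | atom h₁ => cases h₂ with | atom h₂ => exact .atom (h₁.trans ent_trans h₂)
  | crit h₁ => cases h₂ with | crit h₂ => exact .crit (h₁.trans ent_trans h₂)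

theorem Embeds.map_atom {σ τ : List (Atom E C)} (h : Embeds (AtomSim ent) IsCndAtom σ τ) :
    Embeds (TokSim ent) IsCondTok (σ.map Tok.atom) (τ.map Tok.atom) := by
  induction h with
  | nil => exact .nil
  | cons hab _ ih => exact .cons (.atom hab) ih
  | skip hb _ ih => obtain ⟨c, rfl⟩ := hb; exact .skip ⟨c, rfl⟩ ih

theorem Embeds.lift_unwrap {α β β' : Trace E C} (h : Embeds (TokSim ent) IsCondTok α β)
    (hβ : Unwrap β β') : ∃ α', Unwraps α α' ∧ Embeds (TokSim ent) IsCondTok α' β' := by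
  obtain ⟨u, v, σ⟩ := hβ
  obtain ⟨l₁, l₂, rfl, h₁, h₂⟩ := h.exists_append_of_append_right
  cases h₂ with
  | cons hs h₂ =>
    cases hs with
    | crit hτ =>
      refine ⟨_, .single (Unwrap.step l₁ _ _), ?_⟩
      rw [List.append_assoc, List.append_assoc]
      exact h₁.append ((seqSim_iff_embeds.mp hτ).map_atom.append h₂)
  | skip hc _ => obtain ⟨c, hc⟩ := hc; cases hc

theorem Embeds.lift_unwraps {α β β' : Trace E C} (h : Embeds (TokSim ent) IsCondTok α β)
    (hβ : Unwraps β β') : ∃ α', Unwraps α α' ∧ Embeds (TokSim ent) IsCondTok α' β' := by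
  induction hβ with
  | refl => exact ⟨α, .refl, h⟩
  | tail _ hstep ih =>
    obtain ⟨α₁, hα₁, h₁⟩ := ih
    obtain ⟨α₂, hα₂, h₂⟩ := h₁.lift_unwrap hstep
    exact ⟨α₂, hα₁.trans hα₂, h₂⟩

end Simulation

theorem traceSim_trans_general {E C : Type} (ent : C → C → Prop)
    (ent_trans : ∀ c₁ c₂ c₃ : C, ent c₁ c₂ → ent c₂ c₃ → ent c₁ c₃) :
    ∀ α β γ : Trace E C, TraceSim ent α β → TraceSim ent β γ → TraceSim ent α γ := by
  intro α β γ h₁ h₂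
  obtain ⟨α₁, hαα₁, e₁⟩ := traceSim_iff_embeds.mp h₁
  obtain ⟨β₁, hββ₁, e₂⟩ := traceSim_iff_embeds.mp h₂
  obtain ⟨α₂, hα₁α₂, e₃⟩ := e₁.lift_unwraps hββ₁
  exact traceSim_iff_embeds.mpr ⟨α₂, hαα₁.trans hα₁α₂,
    e₃.trans e₂ (TokSim.trans ent_trans) TokSim.isCondTok⟩

/-- the trace simulation relation `⋉` is transitive (given that
the entailment relation `⊨_c` on guard conditions is reflexive and
transitive). -/
theorem traceSim_trans {E C : Type} (ent : C → C → Prop)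
    (ent_refl : ∀ c : C, ent c c)
    (ent_trans : ∀ c₁ c₂ c₃ : C, ent c₁ c₂ → ent c₂ c₃ → ent c₁ c₃) :
    ∀ α β γ : Trace E C, TraceSim ent α β → TraceSim ent β γ → TraceSim ent α γ :=
  traceSim_trans_general ent ent_trans

end SDPaper
end

section
/- If α₁ ⋉ α₂ and α₂ ↷ β₂ (i.e., β₂ is obtained from α₂ by exposing one critical segment), then there exists a trace β₁ such that α₁ ↷ β₁ and β₁ ⋉ β₂. -/
/-
A critical segment can be simulated only by a critical segment, so the segment `⟨σ⟩` exposed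
in `α₂` is the image of a segment `⟨τ⟩` of the trace `β` with `α₁ ↷* β`. Exposing `τ` and `σ`
simultaneously keeps the embedding of `β` into `α₂`, because `τ ⋉ σ` is itself an embedding of
atoms. Finally, the unwrap steps from `α₁` to `β` commute with exposing `⟨τ⟩`, which can
therefore be done first: this gives the single step `α₁ ↷ β₁`.
-/

theorem List.append_append_eq_append_cons_of_not_mem {α : Type*} {a m b p q : List α} {x : α}
    (h : a ++ m ++ b = p ++ x :: q) (hx : x ∉ m) :
    (∃ y, a = p ++ x :: y ∧ q = y ++ m ++ b) ∨ (∃ y, b = y ++ x :: q ∧ p = a ++ m ++ y) := by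
  rw [List.append_assoc, List.append_eq_append_iff] at h
  rcases h with ⟨c, rfl, hc⟩ | ⟨c, rfl, hc⟩
  · rcases List.append_eq_append_iff.1 hc with ⟨d, rfl, rfl⟩ | ⟨d, rfl, hd⟩
    · exact .inr ⟨d, rfl, by simp⟩
    · rcases List.cons_eq_append_iff.1 hd with ⟨rfl, rfl⟩ | ⟨d, rfl, rfl⟩
      · exact .inr ⟨[], rfl, by simp⟩
      · simp at hx
  · rcases List.cons_eq_append_iff.1 hc with ⟨rfl, hm⟩ | ⟨c, rfl, rfl⟩
    · rcases List.append_eq_cons_iff.1 hm with ⟨rfl, rfl⟩ | ⟨m, rfl, rfl⟩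
      · exact .inr ⟨[], rfl, by simp⟩
      · simp at hx
    · exact .inl ⟨c, rfl, by simp⟩

theorem List.get_cons_of_ne_zero {α : Type*} {b : α} {l : List α} {k : Fin (b :: l).length}
    (hk : k ≠ 0) : (b :: l).get k = l.get (k.pred hk) := by
  cases k using Fin.cases with
  | zero => exact absurd rfl hk
  | succ j => simp

namespace SDPaper

section ListEmbedding

variable {A B : Type} {R : A → B → Prop} {K : B → Prop}

inductive EmbedsSkipping (R : A → B → Prop) (K : B → Prop) : List A → List B → Prop
  | nil : EmbedsSkipping R K [] []
  | cons {a b l₁ l₂} : R a b → EmbedsSkipping R K l₁ l₂ → EmbedsSkipping R K (a :: l₁) (b :: l₂)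
  | skip {b l₁ l₂} : K b → EmbedsSkipping R K l₁ l₂ → EmbedsSkipping R K l₁ (b :: l₂)

namespace EmbedsSkipping

theorem exists_fin {l₁ : List A} {l₂ : List B} (h : EmbedsSkipping R K l₁ l₂) :
    ∃ η : Fin l₁.length → Fin l₂.length, StrictMono η ∧
      (∀ i, R (l₁.get i) (l₂.get (η i))) ∧ ∀ j, (∀ i, η i ≠ j) → K (l₂.get j) := by
  induction h with
  | nil => exact ⟨id, strictMono_id, fun i => i.elim0, fun j => j.elim0⟩
  | cons r _ ih =>
    obtain ⟨η, hmono, hR, hK⟩ := ih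
    refine ⟨Fin.cons 0 (Fin.succ ∘ η), Fin.strictMono_cons.2
      ⟨fun _ => Fin.succ_pos _, Fin.strictMono_succ.comp hmono⟩, Fin.cases r hR, ?_⟩
    refine Fin.cases (fun h => absurd rfl (h 0)) fun j hj => hK j fun i hi => hj i.succ ?_
    simp [hi]
  | skip k _ ih =>
    obtain ⟨η, hmono, hR, hK⟩ := ih
    refine ⟨Fin.succ ∘ η, Fin.strictMono_succ.comp hmono, hR, ?_⟩
    refine Fin.cases (fun _ => k) fun j hj => hK j fun i hi => hj i ?_
    simp [hi]

theorem of_fin {l₁ : List A} {l₂ : List B} (η : Fin l₁.length → Fin l₂.length)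
    (hmono : StrictMono η) (hR : ∀ i, R (l₁.get i) (l₂.get (η i)))
    (hK : ∀ j, (∀ i, η i ≠ j) → K (l₂.get j)) : EmbedsSkipping R K l₁ l₂ := by
  induction l₂ generalizing l₁ with
  | nil =>
    cases l₁ with
    | nil => exact .nil
    | cons _ _ => exact (η 0).elim0
  | cons b l₂ ih =>
    by_cases h0 : ∃ i, η i = 0
    · obtain ⟨i₀, hi₀⟩ := h0
      cases l₁ with
      | nil => exact i₀.elim0
      | cons a l₁ =>
        have hη0 : η 0 = 0 := le_antisymm (hi₀ ▸ hmono.monotone (Fin.zero_le i₀)) (Fin.zero_le _)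
        have hne : ∀ i : Fin l₁.length, η i.succ ≠ 0 :=
          fun i => (hη0 ▸ hmono (Fin.succ_pos i)).ne'
        refine .cons (by simpa [hη0] using hR 0)
          (ih (fun i => (η i.succ).pred (hne i)) (fun i j hij => ?_) (fun i => ?_) fun j hj => ?_)
        · simpa [Fin.pred_lt_pred_iff] using hmono (Fin.succ_lt_succ_iff.2 hij)
        · rw [← List.get_cons_of_ne_zero (hne i)]; exact hR i.succ
        · simpa using hK j.succ (Fin.cases (hη0 ▸ (Fin.succ_ne_zero j).symm)
            fun i hi => hj i (by simp [hi]))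
    · push Not at h0
      refine .skip (hK 0 h0)
        (ih (fun i => (η i).pred (h0 i)) (fun i j hij => ?_) (fun i => ?_) fun j hj => ?_)
      · simpa [Fin.pred_lt_pred_iff] using hmono hij
      · rw [← List.get_cons_of_ne_zero (h0 i)]; exact hR i
      · simpa using hK j.succ fun i hi => hj i (by simp [hi])

theorem iff_exists_fin {l₁ : List A} {l₂ : List B} :
    EmbedsSkipping R K l₁ l₂ ↔ ∃ η : Fin l₁.length → Fin l₂.length, StrictMono η ∧
      (∀ i, R (l₁.get i) (l₂.get (η i))) ∧ ∀ j, (∀ i, η i ≠ j) → K (l₂.get j) :=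
  ⟨exists_fin, fun ⟨η, hmono, hR, hK⟩ => of_fin η hmono hR hK⟩

theorem append {l₁ m₁ : List A} {l₂ m₂ : List B} (h : EmbedsSkipping R K l₁ l₂)
    (h' : EmbedsSkipping R K m₁ m₂) : EmbedsSkipping R K (l₁ ++ m₁) (l₂ ++ m₂) := by
  induction h with
  | nil => exact h'
  | cons r _ ih => exact .cons r ih
  | skip k _ ih => exact .skip k ih

theorem map {A' B' : Type} {R' : A' → B' → Prop} {K' : B' → Prop} {f : A → A'} {g : B → B'}
    {l₁ : List A} {l₂ : List B} (h : EmbedsSkipping R K l₁ l₂)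
    (hR : ∀ a b, R a b → R' (f a) (g b)) (hK : ∀ b, K b → K' (g b)) :
    EmbedsSkipping R' K' (l₁.map f) (l₂.map g) := by
  induction h with
  | nil => exact .nil
  | cons r _ ih => exact .cons (hR _ _ r) ih
  | skip k _ ih => exact .skip (hK _ k) ih

theorem exists_eq_append_cons {l₁ : List A} {p q : List B} {x : B}
    (h : EmbedsSkipping R K l₁ (p ++ x :: q)) (hx : ¬ K x) :
    ∃ a p₁ q₁, l₁ = p₁ ++ a :: q₁ ∧ R a x ∧ EmbedsSkipping R K p₁ p ∧ EmbedsSkipping R K q₁ q := by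
  induction p generalizing l₁ with
  | nil =>
    cases h with
    | cons r h' => exact ⟨_, [], _, rfl, r, .nil, h'⟩
    | skip k _ => exact absurd k hx
  | cons y p ih =>
    cases h with
    | cons r h' =>
      obtain ⟨a, p₁, q₁, rfl, hr, hp, hq⟩ := ih h'
      exact ⟨a, _ :: p₁, q₁, rfl, hr, .cons r hp, hq⟩
    | skip k h' =>
      obtain ⟨a, p₁, q₁, rfl, hr, hp, hq⟩ := ih h'
      exact ⟨a, p₁, q₁, rfl, hr, .skip k hp, hq⟩

end EmbedsSkipping

end ListEmbedding

section Traces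

variable {E C : Type}

def Atom.IsCnd (a : Atom E C) : Prop := ∃ c, a = Atom.cnd c

def Tok.IsCnd (t : Tok E C) : Prop := ∃ c, t = condTok c

theorem Unwrap.exists_crit_of_crit {α p q : Trace E C} {τ : List (Atom E C)}
    (h : Unwrap α (p ++ Tok.crit τ :: q)) :
    ∃ p' q', α = p' ++ Tok.crit τ :: q' ∧
      Unwrap (p' ++ τ.map Tok.atom ++ q') (p ++ τ.map Tok.atom ++ q) := by
  generalize hγ : p ++ Tok.crit τ :: q = γ at h
  obtain ⟨a, b, σ⟩ := h
  rcases List.append_append_eq_append_cons_of_not_mem hγ.symm (by simp)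
    with ⟨y, rfl, rfl⟩ | ⟨y, rfl, rfl⟩
  · exact ⟨p, y ++ Tok.crit σ :: b, by simp,
      by simpa using Unwrap.step (p ++ τ.map Tok.atom ++ y) b σ⟩
  · exact ⟨a ++ Tok.crit σ :: y, q, by simp,
      by simpa using Unwrap.step a (y ++ τ.map Tok.atom ++ q) σ⟩

theorem Unwraps.exists_crit_of_crit {α p q : Trace E C} {τ : List (Atom E C)}
    (h : Unwraps α (p ++ Tok.crit τ :: q)) :
    ∃ p' q', α = p' ++ Tok.crit τ :: q' ∧
      Unwraps (p' ++ τ.map Tok.atom ++ q') (p ++ τ.map Tok.atom ++ q) := by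
  induction h using Relation.ReflTransGen.head_induction_on with
  | refl => exact ⟨p, q, rfl, .refl⟩
  | head hstep _ ih =>
    obtain ⟨p₁, q₁, rfl, hu⟩ := ih
    obtain ⟨p₂, q₂, rfl, hstep'⟩ := hstep.exists_crit_of_crit
    exact ⟨p₂, q₂, rfl, .head hstep' hu⟩

theorem Unwraps.exists_unwrap_unwraps {α β γ : Trace E C} (h : Unwraps α β) (h' : Unwrap β γ) :
    ∃ β', Unwrap α β' ∧ Unwraps β' γ := by
  obtain ⟨p, q, τ⟩ := h'
  obtain ⟨p', q', rfl, hu⟩ := h.exists_crit_of_crit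
  exact ⟨_, .step p' q' τ, hu⟩

variable (ent : C → C → Prop)

theorem traceSim_iff {α γ : Trace E C} :
    TraceSim ent α γ ↔ ∃ β, Unwraps α β ∧ EmbedsSkipping (TokSim ent) Tok.IsCnd β γ := by
  simp only [TraceSim, EmbedsSkipping.iff_exists_fin, Tok.IsCnd]

theorem SeqSim.embedsSkipping_map_atom {τ σ : List (Atom E C)} (h : SeqSim ent τ σ) :
    EmbedsSkipping (TokSim ent) Tok.IsCnd (τ.map Tok.atom) (σ.map Tok.atom) := by
  obtain ⟨η, hmono, hR, hK⟩ := h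
  exact (EmbedsSkipping.of_fin (K := Atom.IsCnd) η hmono hR hK).map (fun _ _ => TokSim.atom)
    fun _ ⟨c, hc⟩ => ⟨c, hc ▸ rfl⟩

theorem EmbedsSkipping.exists_unwrap_of_unwrap {β γ γ' : Trace E C}
    (h : EmbedsSkipping (TokSim ent) Tok.IsCnd β γ) (h' : Unwrap γ γ') :
    ∃ β', Unwrap β β' ∧ EmbedsSkipping (TokSim ent) Tok.IsCnd β' γ' := by
  obtain ⟨A, B, σ⟩ := h'
  obtain ⟨t, p, q, rfl, hts, hp, hq⟩ := h.exists_eq_append_cons (by simp [Tok.IsCnd, condTok])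
  cases hts with
  | crit hτσ =>
    refine ⟨_, .step p q _, ?_⟩
    simpa using hp.append ((hτσ.embedsSkipping_map_atom ent).append hq)

end Traces

theorem traceSim_unwrap_general {E C : Type} (ent : C → C → Prop)
    (α₁ α₂ β₂ : Trace E C) (h₁ : TraceSim ent α₁ α₂) (h₂ : Unwrap α₂ β₂) :
    ∃ β₁ : Trace E C, Unwrap α₁ β₁ ∧ TraceSim ent β₁ β₂ := by
  obtain ⟨β, hαβ, hβ⟩ := (traceSim_iff ent).1 h₁
  obtain ⟨β', hββ', hβ'⟩ := hβ.exists_unwrap_of_unwrap ent h₂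
  obtain ⟨β₁, hαβ₁, hβ₁β'⟩ := hαβ.exists_unwrap_unwraps hββ'
  exact ⟨β₁, hαβ₁, (traceSim_iff ent).2 ⟨β', hβ₁β', hβ'⟩⟩

/-- if `α₁ ⋉ α₂` and `α₂ ↷ β₂` (one unwrap step, exposing one
critical segment), then there exists a trace `β₁` with `α₁ ↷ β₁` and
`β₁ ⋉ β₂` (given that `⊨_c` is reflexive and transitive). -/
theorem traceSim_unwrap {E C : Type} (ent : C → C → Prop)
    (ent_refl : ∀ c : C, ent c c)
    (ent_trans : ∀ c₁ c₂ c₃ : C, ent c₁ c₂ → ent c₂ c₃ → ent c₁ c₃)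
    (α₁ α₂ β₂ : Trace E C) (h₁ : TraceSim ent α₁ α₂) (h₂ : Unwrap α₂ β₂) :
    ∃ β₁ : Trace E C, Unwrap α₁ β₁ ∧ TraceSim ent β₁ β₂ :=
  traceSim_unwrap_general ent α₁ α₂ β₂ h₁ h₂

end SDPaper
end

section
/- The trace semantics of sequence diagrams possesses substitutivity: for every context C and all sequence diagrams D₁, D₂, if ⟦D₁⟧ = ⟦D₂⟧ then ⟦C[D₁]⟧ = ⟦C[D₂]⟧. -/
namespace SDPaper

/-! ### Obligations, meanings and the operations of the trace semantics -/

/-- An obligation is a set of traces. -/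
abbrev Obl (E C : Type) : Type := Set (Trace E C)

/-- A meaning is a set of (alternative) obligations. -/
abbrev Meaning (E C : Type) : Type := Set (Obl E C)

/-- `↓M` removes redundant obligations: it keeps the obligations of `M` that do
not strictly contain another obligation of `M`. -/
def down {A : Type} (M : Set (Set A)) : Set (Set A) :=
  {O | O ∈ M ∧ ¬ ∃ O' ∈ M, O' ⊂ O}

/-- Concatenation `•` of two sets of strings. -/
def setConcat {A : Type} (O₁ O₂ : Set (List A)) : Set (List A) :=
  {t | ∃ t₁ ∈ O₁, ∃ t₂ ∈ O₂, t = t₁ ++ t₂}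

/-- Pairwise concatenation `•♯` on sets of sets of strings. -/
def mConcat {A : Type} (M₁ M₂ : Set (Set (List A))) : Set (Set (List A)) :=
  {O | ∃ O₁ ∈ M₁, ∃ O₂ ∈ M₂, O = setConcat O₁ O₂}

/-- Pairwise union `∪♯` on sets of sets. -/
def mUnion {A : Type} (M₁ M₂ : Set (Set A)) : Set (Set A) :=
  {O | ∃ O₁ ∈ M₁, ∃ O₂ ∈ M₂, O = O₁ ∪ O₂}

/-- Pairwise intersection `∩♯` on sets of sets. -/
def mInter {A : Type} (M₁ M₂ : Set (Set A)) : Set (Set A) :=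
  {O | ∃ O₁ ∈ M₁, ∃ O₂ ∈ M₂, O = O₁ ∩ O₂}

/-- `Interleave μ ν σ` holds iff `σ ∈ μ ⫴ ν`, i.e. `σ` is an interleaving of
`μ` and `ν`. -/
inductive Interleave {A : Type} : List A → List A → List A → Prop where
  | nilLeft (μ : List A) : Interleave [] μ μ
  | nilRight (μ : List A) : Interleave μ [] μ
  | consLeft {x : A} {μ ν σ : List A} :
      Interleave μ ν σ → Interleave (x :: μ) ν (x :: σ)
  | consRight {y : A} {μ ν σ : List A} :
      Interleave μ ν σ → Interleave μ (y :: ν) (y :: σ)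

/-- `O₁ ⫴̂ O₂`: the set of obligations `O` such that every pair of traces
`σ₁ ∈ O₁`, `σ₂ ∈ O₂` has an interleaving in `O`. -/
def oblInterleave {A : Type} (O₁ O₂ : Set (List A)) : Set (Set (List A)) :=
  {O | ∀ σ₁ ∈ O₁, ∀ σ₂ ∈ O₂, ∃ σ ∈ O, Interleave σ₁ σ₂ σ}

/-- `M₁ ⫴♭ M₂`: interleaving of meanings, with redundant obligations removed
by `↓`. -/
def mInterleave {A : Type} (M₁ M₂ : Set (Set (List A))) : Set (Set (List A)) :=
  down (⋃ O₁ ∈ M₁, ⋃ O₂ ∈ M₂, oblInterleave O₁ O₂)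

/-- Tag every token of a trace with the label `ℓ`. -/
def tagTrace {A L : Type} (t : List A) (ℓ : L) : List (A × L) :=
  t.map (fun a => (a, ℓ))

/-- Remove the tags of a tagged trace. -/
def untagTrace {A L : Type} (t : List (A × L)) : List A := t.map Prod.fst

/-- `tag` lifted to meanings. -/
def tagM {A L : Type} (M : Set (Set (List A))) (ℓ : L) : Set (Set (List (A × L))) :=
  (fun O => (fun t => tagTrace t ℓ) '' O) '' M

/-- `untag` lifted to meanings. -/
def untagM {A L : Type} (M : Set (Set (List (A × L)))) : Set (Set (List A)) :=
  (fun O => untagTrace '' O) '' M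

/-- The fold rewriting relation `⊸` on (possibly infinite) obligations,
eliminating an unnecessary decision point. -/
def FoldStepSet {E C : Type} (ent : C → C → Prop) (taut : C) (disj : C → C → C)
    (O O' : Obl E C) : Prop :=
  ∃ (α β : Trace E C) (c c' : C),
    ent (disj c c') taut ∧
    (α ++ condTok c :: β) ∈ O ∧ (α ++ condTok c' :: β) ∈ O ∧
    (α ++ condTok c :: β : Trace E C) ≠ (α ++ condTok c' :: β) ∧
    O' = insert (α ++ β) (O \ {α ++ condTok c :: β, α ++ condTok c' :: β})

open Classical in
/-- `fold(O)`: the normal form of the obligation `O` under the fold rewriting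
relation (chosen by choice; `O` itself if no normal form is reachable). -/
noncomputable def foldObl {E C : Type} (ent : C → C → Prop) (taut : C)
    (disj : C → C → C) (O : Obl E C) : Obl E C :=
  if h : ∃ O' : Obl E C, Relation.ReflTransGen (FoldStepSet ent taut disj) O O' ∧
      ∀ O'' : Obl E C, ¬ FoldStepSet ent taut disj O' O''
  then h.choose else O

/-- `fold` lifted to meanings. -/
noncomputable def foldM {E C : Type} (ent : C → C → Prop) (taut : C)
    (disj : C → C → C) (M : Meaning E C) : Meaning E C :=
  (foldObl ent taut disj) '' M

/-- `unwrap(t)`: the normal form of `t` under `↷`, exposing all critical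
segments. -/
def unwrapTrace {E C : Type} (t : Trace E C) : Trace E C :=
  t.flatMap fun tok =>
    match tok with
    | Tok.atom a => [Tok.atom a]
    | Tok.crit σ => σ.map Tok.atom

/-- The sequence of events and conditions of a trace without critical
segments. -/
def traceAtoms {E C : Type} (t : Trace E C) : List (Atom E C) :=
  t.flatMap fun tok =>
    match tok with
    | Tok.atom a => [a]
    | Tok.crit σ => σ

/-- `wrap(σ) = ⟨σ⟩`. -/
def wrapTrace {E C : Type} (t : Trace E C) : Trace E C :=
  [Tok.crit (traceAtoms t)]

/-- `unwrap` lifted to meanings. -/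
def unwrapM {E C : Type} (M : Meaning E C) : Meaning E C :=
  (fun O => unwrapTrace '' O) '' M

/-- `wrap` lifted to meanings. -/
def wrapM {E C : Type} (M : Meaning E C) : Meaning E C :=
  (fun O => wrapTrace '' O) '' M

/-- The singleton meaning `{{t}}`. -/
def unitM {E C : Type} (t : Trace E C) : Meaning E C := {{t}}

/-! ### Sequence diagrams and their trace semantics -/

/-- The signature of the ambient setting: guard conditions with entailment
`⊨_c` (reflexive and transitive), negation `¬_c`, disjunction `∨_c`, the
tautology `true`, and a lifelines map associating each event with the set of
the lifelines (names in `N`) it occurs on. -/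
structure Sig (E C N : Type) where
  ent : C → C → Prop
  neg : C → C
  disj : C → C → C
  taut : C
  ll : E → Set N
  ent_refl : ∀ c : C, ent c c
  ent_trans : ∀ c₁ c₂ c₃ : C, ent c₁ c₂ → ent c₂ c₃ → ent c₁ c₃

/-- Abstract syntax of sequence diagrams: `τ`, events, `opt`, `alt`, `loop`,
`critical`, `par`, `strict`, `seq` and `block(L,ι,↠)` (with nonempty finite
label set `L = Fin (n+1)`, `ι : L → SD` and strict sequencing order `↠`). -/
inductive SD (E C : Type) : Type where
  | tau : SD E C
  | evt (e : E) : SD E C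
  | opt (c : C) (D : SD E C) : SD E C
  | alt (c : C) (D₁ D₂ : SD E C) : SD E C
  | loop (c : C) (D : SD E C) : SD E C
  | critical (D : SD E C) : SD E C
  | par (D₁ D₂ : SD E C) : SD E C
  | strict (D₁ D₂ : SD E C) : SD E C
  | seq (D₁ D₂ : SD E C) : SD E C
  | block (n : ℕ) (ι : Fin (n + 1) → SD E C) (r : Fin (n + 1) → Fin (n + 1) → Prop) : SD E C

/-- The lifelines of an event or a condition. -/
def atomLL {E C N : Type} (S : Sig E C N) : Atom E C → Set N
  | Atom.evt e => S.ll e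
  | Atom.cnd _ => ∅

/-- The lifelines of a token. -/
def tokLL {E C N : Type} (S : Sig E C N) : Tok E C → Set N
  | Tok.atom a => atomLL S a
  | Tok.crit σ => ⋃ a ∈ σ, atomLL S a

/-- Two tokens are related by `~` iff they share lifelines. -/
def shareLL {E C N : Type} (S : Sig E C N) (t₁ t₂ : Tok E C) : Prop :=
  (tokLL S t₁ ∩ tokLL S t₂).Nonempty

/-- `st(↠)`: the tagged traces satisfying the strict sequencing order `↠`:
whenever the label of position `i` precedes (w.r.t. `↠*`) the distinct label
of position `j`, then `i ≤ j`. -/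
def ST {E C : Type} {n : ℕ} (r : Fin (n + 1) → Fin (n + 1) → Prop) :
    Set (List (Tok E C × Fin (n + 1))) :=
  {σ | ∀ i j : Fin σ.length,
    Relation.ReflTransGen r (σ.get i).2 (σ.get j).2 →
    (σ.get i).2 ≠ (σ.get j).2 → (i : ℕ) ≤ (j : ℕ)}

/-- `Tt_seq`: the tagged traces satisfying the weak sequencing order: a token
tagged `1` (i.e. from the first operand, tag `0 : Fin 2`) sharing lifelines
with a token tagged `2` (tag `1 : Fin 2`) must occur before it. -/
def TTseq {E C N : Type} (S : Sig E C N) : Set (List (Tok E C × Fin 2)) :=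
  {σ | ∀ i j : Fin σ.length,
    (σ.get i).2 = 0 → (σ.get j).2 = 1 →
    shareLL S (σ.get i).1 (σ.get j).1 → (i : ℕ) < (j : ℕ)}

/-- Weak sequencing `⨝♭` of two meanings. -/
def weakSeq {E C N : Type} (S : Sig E C N) (M₁ M₂ : Meaning E C) : Meaning E C :=
  untagM (mInter {TTseq S} (mInterleave (tagM M₁ (0 : Fin 2)) (tagM M₂ (1 : Fin 2))))

/-- Interleaving `⫴♭` of a finite nonempty family of meanings. -/
def famInterleave {A : Type} : (k : ℕ) → (Fin (k + 1) → Set (Set (List A))) → Set (Set (List A))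
  | 0, f => f 0
  | k + 1, f => mInterleave (f 0) (famInterleave k (fun i => f i.succ))

/-- The iteration `Xᵢ` in the semantics of `loop(c,D)`:
`X₀ = {{¬_c(c)}}` and `X_{i+1} = ({{c}} •♯ (⟦D⟧ ⨝♭ Xᵢ)) ∪♯ {{¬_c(c)}}`. -/
def loopX {E C N : Type} (S : Sig E C N) (c : C) (M : Meaning E C) : ℕ → Meaning E C
  | 0 => unitM [condTok (S.neg c)]
  | i + 1 =>
      mUnion (mConcat (unitM [condTok c]) (weakSeq S M (loopX S c M i)))
        (unitM [condTok (S.neg c)])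

/-- The trace semantics `⟦D⟧` of a sequence diagram: the set of its
alternative obligations. -/
noncomputable def sem {E C N : Type} (S : Sig E C N) : SD E C → Meaning E C
  | SD.tau => unitM []
  | SD.evt e => unitM [evtTok e]
  | SD.opt c D =>
      down (foldM S.ent S.taut S.disj
        (mUnion (mConcat (unitM [condTok c]) (sem S D)) (unitM [condTok (S.neg c)])))
  | SD.alt c D₁ D₂ =>
      down (foldM S.ent S.taut S.disj
        (mUnion (mConcat (unitM [condTok c]) (sem S D₁))
          (mConcat (unitM [condTok (S.neg c)]) (sem S D₂))))
  | SD.loop c D => ⋃ i : ℕ, loopX S c (sem S D) i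
  | SD.critical D => wrapM (down (foldM S.ent S.taut S.disj (unwrapM (sem S D))))
  | SD.par D₁ D₂ => mInterleave (sem S D₁) (sem S D₂)
  | SD.strict D₁ D₂ => down (foldM S.ent S.taut S.disj (mConcat (sem S D₁) (sem S D₂)))
  | SD.seq D₁ D₂ => weakSeq S (sem S D₁) (sem S D₂)
  | SD.block n ι r =>
      untagM (mInter {ST r} (famInterleave n (fun ℓ => tagM (sem S (ι ℓ)) ℓ)))

/-- `Evt(D)`: the set of observable events occurring in `D`. -/
def evts {E C : Type} : SD E C → Set E
  | SD.tau => ∅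
  | SD.evt e => {e}
  | SD.opt _ D => evts D
  | SD.alt _ D₁ D₂ => evts D₁ ∪ evts D₂
  | SD.loop _ D => evts D
  | SD.critical D => evts D
  | SD.par D₁ D₂ => evts D₁ ∪ evts D₂
  | SD.strict D₁ D₂ => evts D₁ ∪ evts D₂
  | SD.seq D₁ D₂ => evts D₁ ∪ evts D₂
  | SD.block n ι _ => ⋃ ℓ : Fin (n + 1), evts (ι ℓ)

open Classical in
/-- `hide_U(D)`: replace every occurrence of each event `e ∈ U` in `D`
with `τ`. -/
noncomputable def hide {E C : Type} (U : Set E) : SD E C → SD E C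
  | SD.tau => SD.tau
  | SD.evt e => if e ∈ U then SD.tau else SD.evt e
  | SD.opt c D => SD.opt c (hide U D)
  | SD.alt c D₁ D₂ => SD.alt c (hide U D₁) (hide U D₂)
  | SD.loop c D => SD.loop c (hide U D)
  | SD.critical D => SD.critical (hide U D)
  | SD.par D₁ D₂ => SD.par (hide U D₁) (hide U D₂)
  | SD.strict D₁ D₂ => SD.strict (hide U D₁) (hide U D₂)
  | SD.seq D₁ D₂ => SD.seq (hide U D₁) (hide U D₂)
  | SD.block n ι r => SD.block n (fun ℓ => hide U (ι ℓ)) r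

/-- `D₁ ⪰ D₂`: `D₁` refines `D₂`, i.e. for every obligation `O₁ ∈ ⟦D₁⟧` there
is an obligation `O₂ ∈ ⟦D₂⟧` such that every trace of `O₂` is simulated by
some trace of `O₁`. -/
def Refines {E C N : Type} (S : Sig E C N) (D₁ D₂ : SD E C) : Prop :=
  ∀ O₁ ∈ sem S D₁, ∃ O₂ ∈ sem S D₂, ∀ t₂ ∈ O₂, ∃ t₁ ∈ O₁, TraceSim S.ent t₁ t₂

end SDPaper

namespace SDPaper

/-- A context is a sequence diagram with exactly one of its sub-fragments
replaced by a special hole symbol `𝕩`. -/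
inductive Ctx (E C : Type) : Type where
  | hole : Ctx E C
  | opt (c : C) (K : Ctx E C) : Ctx E C
  | altLeft (c : C) (K : Ctx E C) (D₂ : SD E C) : Ctx E C
  | altRight (c : C) (D₁ : SD E C) (K : Ctx E C) : Ctx E C
  | loop (c : C) (K : Ctx E C) : Ctx E C
  | critical (K : Ctx E C) : Ctx E C
  | parLeft (K : Ctx E C) (D₂ : SD E C) : Ctx E C
  | parRight (D₁ : SD E C) (K : Ctx E C) : Ctx E C
  | strictLeft (K : Ctx E C) (D₂ : SD E C) : Ctx E C
  | strictRight (D₁ : SD E C) (K : Ctx E C) : Ctx E C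
  | seqLeft (K : Ctx E C) (D₂ : SD E C) : Ctx E C
  | seqRight (D₁ : SD E C) (K : Ctx E C) : Ctx E C
  | block (n : ℕ) (ι : Fin (n + 1) → SD E C) (ℓ₀ : Fin (n + 1)) (K : Ctx E C)
      (r : Fin (n + 1) → Fin (n + 1) → Prop) : Ctx E C

/-- `C[D]`: the embedding of the sequence diagram `D` into the context `C`,
obtained by replacing the hole `𝕩` with `D`. -/
def Ctx.fill {E C : Type} : Ctx E C → SD E C → SD E C
  | Ctx.hole, D => D
  | Ctx.opt c K, D => SD.opt c (K.fill D)
  | Ctx.altLeft c K D₂, D => SD.alt c (K.fill D) D₂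
  | Ctx.altRight c D₁ K, D => SD.alt c D₁ (K.fill D)
  | Ctx.loop c K, D => SD.loop c (K.fill D)
  | Ctx.critical K, D => SD.critical (K.fill D)
  | Ctx.parLeft K D₂, D => SD.par (K.fill D) D₂
  | Ctx.parRight D₁ K, D => SD.par D₁ (K.fill D)
  | Ctx.strictLeft K D₂, D => SD.strict (K.fill D) D₂
  | Ctx.strictRight D₁ K, D => SD.strict D₁ (K.fill D)
  | Ctx.seqLeft K D₂, D => SD.seq (K.fill D) D₂
  | Ctx.seqRight D₁ K, D => SD.seq D₁ (K.fill D)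
  | Ctx.block n ι ℓ₀ K r, D => SD.block n (Function.update ι ℓ₀ (K.fill D)) r

/-- The semantic equations of `sem`, read along a context with `M` standing for
the meaning of the hole. -/
noncomputable def Ctx.semWith {E C N : Type} (S : Sig E C N) :
    Ctx E C → Meaning E C → Meaning E C
  | Ctx.hole, M => M
  | Ctx.opt c K, M =>
      down (foldM S.ent S.taut S.disj
        (mUnion (mConcat (unitM [condTok c]) (K.semWith S M)) (unitM [condTok (S.neg c)])))
  | Ctx.altLeft c K D₂, M =>
      down (foldM S.ent S.taut S.disj
        (mUnion (mConcat (unitM [condTok c]) (K.semWith S M))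
          (mConcat (unitM [condTok (S.neg c)]) (sem S D₂))))
  | Ctx.altRight c D₁ K, M =>
      down (foldM S.ent S.taut S.disj
        (mUnion (mConcat (unitM [condTok c]) (sem S D₁))
          (mConcat (unitM [condTok (S.neg c)]) (K.semWith S M))))
  | Ctx.loop c K, M => ⋃ i : ℕ, loopX S c (K.semWith S M) i
  | Ctx.critical K, M =>
      wrapM (down (foldM S.ent S.taut S.disj (unwrapM (K.semWith S M))))
  | Ctx.parLeft K D₂, M => mInterleave (K.semWith S M) (sem S D₂)
  | Ctx.parRight D₁ K, M => mInterleave (sem S D₁) (K.semWith S M)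
  | Ctx.strictLeft K D₂, M =>
      down (foldM S.ent S.taut S.disj (mConcat (K.semWith S M) (sem S D₂)))
  | Ctx.strictRight D₁ K, M =>
      down (foldM S.ent S.taut S.disj (mConcat (sem S D₁) (K.semWith S M)))
  | Ctx.seqLeft K D₂, M => weakSeq S (K.semWith S M) (sem S D₂)
  | Ctx.seqRight D₁ K, M => weakSeq S (sem S D₁) (K.semWith S M)
  | Ctx.block n ι ℓ₀ K r, M =>
      untagM (mInter {ST r} (famInterleave n
        (fun ℓ => tagM (Function.update (fun ℓ' => sem S (ι ℓ')) ℓ₀ (K.semWith S M) ℓ) ℓ)))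

theorem sem_fill {E C N : Type} (S : Sig E C N) (K : Ctx E C) (D : SD E C) :
    sem S (K.fill D) = K.semWith S (sem S D) := by
  induction K with
  | block n ι ℓ₀ K r ih =>
    simp only [Ctx.fill, Ctx.semWith, sem, ← ih]
    congr! with ℓ
    exact Function.apply_update (fun _ => sem S) ι ℓ₀ (K.fill D) ℓ
  | _ => simp only [Ctx.fill, Ctx.semWith, sem, *]

/-- substitutivity of the trace semantics: for every context `C`
and all sequence diagrams `D₁`, `D₂`, if `⟦D₁⟧ = ⟦D₂⟧` then
`⟦C[D₁]⟧ = ⟦C[D₂]⟧`. -/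
theorem sem_substitutivity {E C N : Type} (S : Sig E C N) (K : Ctx E C)
    (D₁ D₂ : SD E C) (h : sem S D₁ = sem S D₂) :
    sem S (K.fill D₁) = sem S (K.fill D₂) := by
  rw [sem_fill, sem_fill, h]

end SDPaper
end

section
/- The conformance relation ⊳ on sequence diagrams is reflexive: D ⊳ D for every SD D. -/
namespace SDPaper

/-! ### Names, events over names, substitutions and conformance -/

/-- An event over a denumerable set `Name` of names: a sending (`send = true`)
or receiving (`send = false`) event of a message with a name, a sender, a
receiver and a parameter list of names. -/
structure Event (Name : Type) : Type where
  send : Bool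
  msg : Name
  sender : Name
  receiver : Name
  params : List Name

/-- The action of a substitution `ρ : Name → Name` on an event. -/
def Event.rename {Name : Type} (ρ : Name → Name) (e : Event Name) : Event Name :=
  ⟨e.send, ρ e.msg, ρ e.sender, ρ e.receiver, e.params.map ρ⟩

/-- The lifelines of an event: a sending event is associated with its sender
and a receiving event with its receiver. -/
def Event.lifelines {Name : Type} (e : Event Name) : Set Name :=
  if e.send then {e.sender} else {e.receiver}

/-- The ambient setting over a set `Name` of names: guard conditions built
over `Name`, with entailment `⊨_c` (reflexive and transitive), negation `¬_c`,
disjunction `∨_c`, the tautology `true`, and the action `crename` of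
substitutions on conditions (respecting identity and composition). -/
structure NSig (Name C : Type) where
  ent : C → C → Prop
  neg : C → C
  disj : C → C → C
  taut : C
  crename : (Name → Name) → C → C
  ent_refl : ∀ c : C, ent c c
  ent_trans : ∀ c₁ c₂ c₃ : C, ent c₁ c₂ → ent c₂ c₃ → ent c₁ c₃
  crename_id : ∀ c : C, crename id c = c
  crename_comp : ∀ (ρ₁ ρ₂ : Name → Name) (c : C),
    crename (ρ₂ ∘ ρ₁) c = crename ρ₂ (crename ρ₁ c)

/-- The signature induced by an ambient setting over names. -/
def NSig.toSig {Name C : Type} (S : NSig Name C) : Sig (Event Name) C Name where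
  ent := S.ent
  neg := S.neg
  disj := S.disj
  taut := S.taut
  ll := Event.lifelines
  ent_refl := S.ent_refl
  ent_trans := S.ent_trans

/-- The action of a substitution `ρ : Name → Name` on a sequence diagram:
substitute `ρ(n)` for each occurrence of each name `n`. -/
def sdRename {Name C : Type} (S : NSig Name C) (ρ : Name → Name) :
    SD (Event Name) C → SD (Event Name) C
  | SD.tau => SD.tau
  | SD.evt e => SD.evt (e.rename ρ)
  | SD.opt c D => SD.opt (S.crename ρ c) (sdRename S ρ D)
  | SD.alt c D₁ D₂ => SD.alt (S.crename ρ c) (sdRename S ρ D₁) (sdRename S ρ D₂)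
  | SD.loop c D => SD.loop (S.crename ρ c) (sdRename S ρ D)
  | SD.critical D => SD.critical (sdRename S ρ D)
  | SD.par D₁ D₂ => SD.par (sdRename S ρ D₁) (sdRename S ρ D₂)
  | SD.strict D₁ D₂ => SD.strict (sdRename S ρ D₁) (sdRename S ρ D₂)
  | SD.seq D₁ D₂ => SD.seq (sdRename S ρ D₁) (sdRename S ρ D₂)
  | SD.block n ι r => SD.block n (fun ℓ => sdRename S ρ (ι ℓ)) r

/-- `D₁ ⊳_{ρ,U} D₂`: `D₁` conforms to `D₂` with respect to the substitution
`ρ` and the set of events `U ⊆ Evt(D₁)`, i.e. `ρ(U) ∩ Evt(D₂) = ∅` and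
`ρ(hide_U(D₁)) ⪰ D₂`. -/
noncomputable def ConformsW {Name C : Type} (S : NSig Name C)
    (D₁ D₂ : SD (Event Name) C) (ρ : Name → Name) (U : Set (Event Name)) : Prop :=
  U ⊆ evts D₁ ∧
  Event.rename ρ '' U ∩ evts D₂ = ∅ ∧
  Refines S.toSig (sdRename S ρ (hide U D₁)) D₂

/-- `D₁ ⊳ D₂`: `D₁` conforms to `D₂` with respect to some substitution
`ρ : Name → Name` and some set of events `U ⊆ Evt(D₁)`. -/
noncomputable def Conforms {Name C : Type} (S : NSig Name C)
    (D₁ D₂ : SD (Event Name) C) : Prop :=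
  ∃ (ρ : Name → Name) (U : Set (Event Name)), ConformsW S D₁ D₂ ρ U

end SDPaper

namespace SDPaper

section Simulation

variable {E C : Type} {ent : C → C → Prop}

theorem atomSim_refl (hrefl : ∀ c, ent c c) (a : Atom E C) : AtomSim ent a a := by
  cases a with
  | evt e => exact AtomSim.evt e
  | cnd c => exact AtomSim.cnd (hrefl c)

theorem seqSim_refl (hrefl : ∀ c, ent c c) (α : List (Atom E C)) : SeqSim ent α α :=
  ⟨id, strictMono_id, fun _ => atomSim_refl hrefl _, fun j hj => absurd rfl (hj j)⟩

theorem tokSim_refl (hrefl : ∀ c, ent c c) (t : Tok E C) : TokSim ent t t := by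
  cases t with
  | atom a => exact TokSim.atom (atomSim_refl hrefl a)
  | crit σ => exact TokSim.crit (seqSim_refl hrefl σ)

theorem traceSim_refl (hrefl : ∀ c, ent c c) (t : Trace E C) : TraceSim ent t t :=
  ⟨t, Relation.ReflTransGen.refl, id, strictMono_id, fun _ => tokSim_refl hrefl _,
    fun j hj => absurd rfl (hj j)⟩

end Simulation

theorem refines_refl {E C N : Type} (S : Sig E C N) (D : SD E C) : Refines S D D :=
  fun O hO => ⟨O, hO, fun t ht => ⟨t, ht, traceSim_refl S.ent_refl t⟩⟩

@[simp]
theorem hide_empty {E C : Type} (D : SD E C) : hide (∅ : Set E) D = D := by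
  induction D with
  | tau => rfl
  | evt e => simp only [hide, Set.mem_empty_iff_false, if_false]
  | opt c D ih => rw [hide, ih]
  | alt c D₁ D₂ ih₁ ih₂ => rw [hide, ih₁, ih₂]
  | loop c D ih => rw [hide, ih]
  | critical D ih => rw [hide, ih]
  | par D₁ D₂ ih₁ ih₂ => rw [hide, ih₁, ih₂]
  | strict D₁ D₂ ih₁ ih₂ => rw [hide, ih₁, ih₂]
  | seq D₁ D₂ ih₁ ih₂ => rw [hide, ih₁, ih₂]
  | block n ι r ih => rw [hide, funext ih]

@[simp]
theorem Event.rename_id {Name : Type} (e : Event Name) : e.rename id = e := by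
  simp [Event.rename]

@[simp]
theorem sdRename_id {Name C : Type} (S : NSig Name C) (D : SD (Event Name) C) :
    sdRename S id D = D := by
  induction D with
  | tau => rfl
  | evt e => rw [sdRename, Event.rename_id]
  | opt c D ih => rw [sdRename, ih, S.crename_id]
  | alt c D₁ D₂ ih₁ ih₂ => rw [sdRename, ih₁, ih₂, S.crename_id]
  | loop c D ih => rw [sdRename, ih, S.crename_id]
  | critical D ih => rw [sdRename, ih]
  | par D₁ D₂ ih₁ ih₂ => rw [sdRename, ih₁, ih₂]
  | strict D₁ D₂ ih₁ ih₂ => rw [sdRename, ih₁, ih₂]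
  | seq D₁ D₂ ih₁ ih₂ => rw [sdRename, ih₁, ih₂]
  | block n ι r ih => rw [sdRename, funext ih]

theorem conformsW_id_empty {Name C : Type} (S : NSig Name C) (D : SD (Event Name) C) :
    ConformsW S D D id ∅ := by
  refine ⟨Set.empty_subset _, by rw [Set.image_empty, Set.empty_inter], ?_⟩
  rw [hide_empty, sdRename_id]
  exact refines_refl S.toSig D

/-- the conformance relation `⊳` on sequence diagrams is
reflexive: `D ⊳ D` for every sequence diagram `D`. -/
theorem conforms_refl {Name C : Type} (S : NSig Name C) (D : SD (Event Name) C) :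
    Conforms S D D :=
  ⟨id, ∅, conformsW_id_empty S D⟩

end SDPaper
end
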